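/- Every tree T satisfies ρ(T) ≤ 4, where ρ is the stroll-nonrepetitive chromatic number; in particular π(T) ≤ 4. -/

import Mathlib

/-!
Colour each vertex by `word` of its depth below a root, where `word : ℕ → Fin 4` is squarefree
and has no factor `aba`. For such a sequence every repetitively coloured walk on the ray `ℕ` is
boring (`x i = x (t + i)` for all `i`): one coincidence propagates along the walk, and without
coincidences the turns of the two halves match, so the second half is a translate or a reflection
of the first, which produces a square or a palindrome of length 2 or 3. Hence the two halves of a
repetitively coloured stroll have the same depth profile. The stretch of the stroll from the
shallowest vertex `u` of its first half to the partner of `u` never climbs above `u`, so it stays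
in the subtree below `u`; ending at the depth of `u`, it ends at `u`, contradicting the stroll
condition.

`word` is the fixed point of an 8-uniform morphism on four letters: long periods descend by a
factor 8 because the images of letters can only sit at positions divisible by 8, and short
periods are excluded by a finite check.
-/

/-- `v 0, …, v (n-1)` is a walk in `G`. -/
def IsWalkSeq {V : Type*} (G : SimpleGraph V) (n : ℕ) (v : ℕ → V) : Prop :=
  ∀ i, i + 1 < n → G.Adj (v i) (v (i + 1))

/-- A colouring is stroll-nonrepetitive if no stroll (a walk `(v 0,…,v (2t-1))`
with `v i ≠ v (t+i)` for all `i < t`) is repetitively coloured. -/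
def StrollNonrepetitive {V C : Type*} (G : SimpleGraph V) (φ : V → C) : Prop :=
  ∀ t : ℕ, 0 < t → ∀ v : ℕ → V, IsWalkSeq G (2 * t) v →
    (∀ i < t, v i ≠ v (t + i)) → ∃ i < t, φ (v i) ≠ φ (v (t + i))

open SimpleGraph

theorem eq_zero_of_forall_eq_succ {β : Type*} {f : ℕ → β} {n : ℕ}
    (h : ∀ i, i + 1 < n → f i = f (i + 1)) : ∀ i < n, f i = f 0
  | 0, _ => rfl
  | i + 1, hi => (h i hi).symm.trans (eq_zero_of_forall_eq_succ h i (by omega))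

theorem eq_zero_of_eq_one_of_forall_eq_succ {β : Type*} {f : ℕ → β} {n : ℕ} (h01 : f 0 = f 1)
    (h : ∀ i, i + 2 < n → f i = f (i + 1) → f (i + 1) = f (i + 2)) : ∀ i < n, f i = f 0 :=
  eq_zero_of_forall_eq_succ fun i hi => by
    induction i with
    | zero => exact h01
    | succ i ih => exact h i hi (ih (by omega))

theorem hasse_nat_adj {a b : ℕ} : (hasse ℕ).Adj a b ↔ b = a + 1 ∨ a = b + 1 := by
  simp only [hasse_adj, Nat.covBy_iff_add_one_eq]
  omega

section Walks

variable {V : Type*} {G : SimpleGraph V} {n : ℕ} {v : ℕ → V}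

theorem IsWalkSeq.mono {m : ℕ} (h : IsWalkSeq G n v) (hm : m ≤ n) : IsWalkSeq G m v :=
  fun i hi => h i (by omega)

theorem IsWalkSeq.shift {a m : ℕ} (h : IsWalkSeq G n v) (ha : a + m ≤ n) :
    IsWalkSeq G m (fun i => v (a + i)) :=
  fun i hi => h (a + i) (by omega)

theorem IsWalkSeq.map {W : Type*} {H : SimpleGraph W} (f : G →g H) (h : IsWalkSeq G n v) :
    IsWalkSeq H n (f ∘ v) :=
  fun i hi => f.map_adj (h i hi)

end Walks

namespace IsWalkSeq

variable {n : ℕ} {x : ℕ → ℕ}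

theorem succ_eq_or_eq_succ (hx : IsWalkSeq (hasse ℕ) n x) {i : ℕ} (hi : i + 1 < n) :
    x (i + 1) = x i + 1 ∨ x i = x (i + 1) + 1 :=
  hasse_nat_adj.1 (hx i hi)

theorem exists_eq_of_mem_uIcc (hx : IsWalkSeq (hasse ℕ) n x) {a b v : ℕ} (hab : a ≤ b)
    (hb : b < n) (hv : v ∈ Set.uIcc (x a) (x b)) : ∃ k, a ≤ k ∧ k ≤ b ∧ x k = v := by
  induction b, hab using Nat.le_induction with
  | base => rw [Set.uIcc_self] at hv; exact ⟨a, le_rfl, le_rfl, hv.symm⟩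
  | succ b hab ih =>
    by_cases hv' : v ∈ Set.uIcc (x a) (x b)
    · obtain ⟨k, hak, hkb, hk⟩ := ih (by omega) hv'
      exact ⟨k, hak, by omega, hk⟩
    · have := hx.succ_eq_or_eq_succ hb
      rw [Set.mem_uIcc] at hv hv'
      exact ⟨b + 1, by omega, le_rfl, by omega⟩

theorem exists_range_eq_Icc (hx : IsWalkSeq (hasse ℕ) n x) (hn : 0 < n) :
    ∃ m M, ∀ v, (∃ i < n, x i = v) ↔ m ≤ v ∧ v ≤ M := by
  obtain ⟨imin, himin, hmin⟩ := (Finset.range n).exists_min_image x ⟨0, by simpa⟩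
  obtain ⟨imax, himax, hmax⟩ := (Finset.range n).exists_max_image x ⟨0, by simpa⟩
  simp only [Finset.mem_range] at himin himax hmin hmax
  refine ⟨x imin, x imax, fun v => ⟨?_, fun hv => ?_⟩⟩
  · rintro ⟨i, hi, rfl⟩
    exact ⟨hmin i hi, hmax i hi⟩
  · rcases le_total imin imax with h | h
    · obtain ⟨k, -, hk, hkv⟩ := hx.exists_eq_of_mem_uIcc h himax (Set.mem_uIcc.2 (.inl hv))
      exact ⟨k, by omega, hkv⟩
    · obtain ⟨k, -, hk, hkv⟩ := hx.exists_eq_of_mem_uIcc h himin (Set.mem_uIcc.2 (.inr hv))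
      exact ⟨k, by omega, hkv⟩

end IsWalkSeq

def SquareFreeSeq {α : Type*} (c : ℕ → α) : Prop :=
  ∀ i d, 0 < d → ∃ j < d, c (i + j) ≠ c (i + j + d)

def WalkNonrepetitive {V C : Type*} (G : SimpleGraph V) (φ : V → C) : Prop :=
  ∀ t v, IsWalkSeq G (2 * t) v → (∀ i < t, φ (v i) = φ (v (t + i))) → ∀ i < t, v i = v (t + i)

namespace SquareFreeSeq

variable {α : Type*} {c : ℕ → α} (hc : SquareFreeSeq c) (h2 : ∀ n, c n ≠ c (n + 2))
include hc

theorem ne_succ (n : ℕ) : c n ≠ c (n + 1) := by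
  obtain ⟨j, hj, hne⟩ := hc n 1 one_pos
  obtain rfl : j = 0 := by omega
  exact hne

include h2

theorem eq_of_le_add_two {p q : ℕ} (h : c p = c q) (hpq : p ≤ q + 2) (hqp : q ≤ p + 2) :
    p = q := by
  rcases lt_trichotomy p q with hlt | heq | hgt
  · obtain rfl | rfl : q = p + 1 ∨ q = p + 2 := by omega
    exacts [(hc.ne_succ p h).elim, (h2 p h).elim]
  · exact heq
  · obtain rfl | rfl : p = q + 1 ∨ p = q + 2 := by omega
    exacts [(hc.ne_succ q h.symm).elim, (h2 q h.symm).elim]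

theorem eq_of_adj_of_adj {p a b : ℕ} (ha : (hasse ℕ).Adj p a) (hb : (hasse ℕ).Adj p b)
    (h : c a = c b) : a = b := by
  rw [hasse_nat_adj] at ha hb
  exact hc.eq_of_le_add_two h2 h (by omega) (by omega)

section Walk

variable {t : ℕ} {x : ℕ → ℕ} (hx : IsWalkSeq (hasse ℕ) (2 * t) x)
  (hrep : ∀ i < t, c (x i) = c (x (t + i)))
include hx hrep

theorem coincide_iff_succ {i : ℕ} (hi : i + 1 < t) :
    x i = x (t + i) ↔ x (i + 1) = x (t + (i + 1)) := by
  have hadj := hx i (by omega)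
  have hadj' : (hasse ℕ).Adj (x (t + i)) (x (t + (i + 1))) := hx (t + i) (by omega)
  constructor
  · intro h
    rw [← h] at hadj'
    exact hc.eq_of_adj_of_adj h2 hadj hadj' (hrep _ hi)
  · intro h
    rw [← h] at hadj'
    exact hc.eq_of_adj_of_adj h2 hadj.symm hadj'.symm (hrep _ (by omega))

theorem turn_iff {i : ℕ} (hi : i + 2 < t) :
    x (i + 2) = x i ↔ x (t + (i + 2)) = x (t + i) := by
  have h0 := hrep i (by omega)
  have h2' := hrep (i + 2) hi
  constructor
  · intro h
    exact hc.eq_of_adj_of_adj h2 (hx (t + i + 1) (by omega)) (hx (t + i) (by omega)).symm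
      (by rw [← h2', h, h0])
  · intro h
    exact hc.eq_of_adj_of_adj h2 (hx (i + 1) (by omega)) (hx i (by omega)).symm
      (by rw [h2', h, h0])

theorem affine_step {ε : ℤ} (hε : ε = 1 ∨ ε = -1) {i : ℕ} (hi : i + 2 < t)
    (h : (x (t + i) : ℤ) - ε * x i = x (t + (i + 1)) - ε * x (i + 1)) :
    (x (t + (i + 1)) : ℤ) - ε * x (i + 1) = x (t + (i + 2)) - ε * x (i + 2) := by
  have s0 : x (i + 1) = x i + 1 ∨ x i = x (i + 1) + 1 := hx.succ_eq_or_eq_succ (by omega)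
  have s1 : x (i + 2) = x (i + 1) + 1 ∨ x (i + 1) = x (i + 2) + 1 :=
    hx.succ_eq_or_eq_succ (i := i + 1) (by omega)
  have s2 : x (t + (i + 1)) = x (t + i) + 1 ∨ x (t + i) = x (t + (i + 1)) + 1 :=
    hx.succ_eq_or_eq_succ (i := t + i) (by omega)
  have s3 : x (t + (i + 2)) = x (t + (i + 1)) + 1 ∨ x (t + (i + 1)) = x (t + (i + 2)) + 1 :=
    hx.succ_eq_or_eq_succ (i := t + (i + 1)) (by omega)
  have := hc.turn_iff h2 hx hrep hi
  rcases hε with rfl | rfl <;> omega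

theorem exists_isometry :
    ∃ ε : ℤ, (ε = 1 ∨ ε = -1) ∧ ∀ i < t, (x (t + i) : ℤ) - ε * x i = x t - ε * x 0 := by
  rcases lt_or_ge t 2 with ht | ht
  · refine ⟨1, .inl rfl, fun i hi => ?_⟩
    obtain rfl : i = 0 := by omega
    simp
  obtain ⟨ε, hε, h01⟩ : ∃ ε : ℤ, (ε = 1 ∨ ε = -1) ∧
      (x t : ℤ) - ε * x 0 = x (t + 1) - ε * x 1 := by
    have s0 : x 1 = x 0 + 1 ∨ x 0 = x 1 + 1 := hx.succ_eq_or_eq_succ (by omega)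
    have st := hx.succ_eq_or_eq_succ (i := t) (by omega)
    rcases s0 with s0 | s0 <;> rcases st with st | st <;>
      first | exact ⟨1, .inl rfl, by omega⟩ | exact ⟨-1, .inr rfl, by omega⟩
  refine ⟨ε, hε, fun i hi => ?_⟩
  simpa using eq_zero_of_eq_one_of_forall_eq_succ (f := fun i => (x (t + i) : ℤ) - ε * x i)
    (by simpa using h01) (fun i hi h => hc.affine_step h2 hx hrep hε hi h) i hi

theorem false_of_forall_ne (ht : 0 < t) (hne : ∀ i < t, x i ≠ x (t + i)) : False := by
  obtain ⟨ε, hε, hiso⟩ := hc.exists_isometry h2 hx hrep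
  obtain ⟨m, M, hrange⟩ := (hx.mono (by omega : t ≤ 2 * t)).exists_range_eq_Icc ht
  have hpair : ∀ p, m ≤ p → p ≤ M → ∃ q : ℕ, (q : ℤ) = x t - ε * x 0 + ε * p ∧ c p = c q := by
    intro p hmp hpM
    obtain ⟨i, hi, rfl⟩ := (hrange p).2 ⟨hmp, hpM⟩
    exact ⟨x (t + i), by linarith [hiso i hi], hrep i hi⟩
  have h0 := (hrange (x 0)).1 ⟨0, ht, rfl⟩
  have hlast := (hrange (x (t - 1))).1 ⟨t - 1, by omega, rfl⟩
  have hstep : x t = x (t - 1) + 1 ∨ x (t - 1) = x t + 1 := by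
    simpa [Nat.sub_add_cancel ht] using hx.succ_eq_or_eq_succ (i := t - 1) (by omega)
  have hne0 : x 0 ≠ x t := by simpa using hne 0 ht
  rcases hε with rfl | rfl
  -- a translation gives a square of period `|x t - x 0|` inside `[m, M]`
  · rcases Nat.lt_or_gt_of_ne hne0 with hlt | hgt
    · obtain ⟨j, hj, hsq⟩ := hc m (x t - x 0) (by omega)
      obtain ⟨q, hq, hcq⟩ := hpair (m + j) (by omega) (by omega)
      obtain rfl : q = m + j + (x t - x 0) := by omega
      exact hsq hcq
    · obtain ⟨q₀, hq₀, -⟩ := hpair m le_rfl (by omega)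
      obtain ⟨j, hj, hsq⟩ := hc (m - (x 0 - x t)) (x 0 - x t) (by omega)
      obtain ⟨q, hq, hcq⟩ := hpair (m + j) (by omega) (by omega)
      obtain rfl : q = m - (x 0 - x t) + j := by omega
      exact hsq (by rw [← hcq]; congr 1; omega)
  -- the reflection `p ↦ x t + x 0 - p` moves some `p ∈ [m, M]` by 1 or 2
  · obtain ⟨p, hmp, hpM, hp⟩ : ∃ p, m ≤ p ∧ p ≤ M ∧
        (x t + x 0 = 2 * p + 1 ∨ x t + x 0 + 1 = 2 * p ∨
          x t + x 0 = 2 * p + 2 ∨ x t + x 0 + 2 = 2 * p) := by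
      rcases Nat.even_or_odd' (x t + x 0) with ⟨z, hz | hz⟩
      · by_cases hzm : m < z
        · exact ⟨z - 1, by omega, by omega, by omega⟩
        · exact ⟨m + 1, by omega, by omega, by omega⟩
      · by_cases hzm : m ≤ z
        · exact ⟨z, hzm, by omega, by omega⟩
        · exact ⟨m, le_rfl, by omega, by omega⟩
    obtain ⟨q, hq, hcq⟩ := hpair p hmp hpM
    have := hc.eq_of_le_add_two h2 hcq (by omega) (by omega)
    omega

end Walk

theorem walkNonrepetitive_hasse : WalkNonrepetitive (hasse ℕ) c := by
  intro t x hx hrep i hi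
  have hcoin : ∀ i < t, (x i = x (t + i)) = (x 0 = x (t + 0)) :=
    eq_zero_of_forall_eq_succ fun i hi => propext (hc.coincide_iff_succ h2 hx hrep hi)
  by_contra hi'
  refine hc.false_of_forall_ne h2 hx hrep (by omega) fun j hj hj' => hi' ?_
  rwa [hcoin i hi, ← hcoin j hj]

end SquareFreeSeq

def morph (a : Fin 4) (j : ℕ) : Fin 4 :=
  ![![0, 3, 1, 2, 3, 0, 2, 1], ![0, 3, 1, 2, 3, 0, 1, 2],
    ![0, 3, 2, 1, 3, 0, 2, 1], ![0, 3, 2, 1, 3, 0, 1, 2]] a (Fin.ofNat 8 j)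

def morph2 (a b : Fin 4) (u : ℕ) : Fin 4 :=
  if u < 64 then morph (morph a (u / 8)) u else morph (morph b (u / 8)) u

theorem morph_zero (a : Fin 4) : morph a 0 = 0 := by
  revert a; decide

theorem morph_seven_ne_zero (a : Fin 4) : morph a 7 ≠ 0 := by
  revert a; decide

theorem morph_ne_succ (a : Fin 4) {j : ℕ} (hj : j < 7) : morph a j ≠ morph a (j + 1) := by
  revert a j; decide

theorem morph_injective {a b : Fin 4} (h : ∀ j < 8, morph a j = morph b j) : a = b := by
  revert a b; decide

theorem morph_eq_of_mod_eq (a : Fin 4) {j k : ℕ} (h : j % 8 = k % 8) : morph a j = morph a k := by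
  simp only [morph, Fin.ofNat, h]

theorem morph_sync {a b : Fin 4} (hab : a ≠ b) (c : Fin 4) {r : ℕ} (hr : 0 < r) (hr8 : r < 8) :
    ∃ j < 8, (if r + j < 8 then morph a (r + j) else morph b (r + j)) ≠ morph c j := by
  have key : ∀ a b c : Fin 4, a ≠ b → ∀ r < 8, 0 < r →
      ∃ j < 8, (if r + j < 8 then morph a (r + j) else morph b (r + j)) ≠ morph c j := by
    decide
  exact key a b c hab r hr8 hr

theorem morph2_exists_ne {a b : Fin 4} (hab : a ≠ b) {d s : ℕ} (hd : 2 ≤ d) (hd16 : d < 16)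
    (hs : s < 64) : ∃ j < d - 1, morph2 a b (s + j) ≠ morph2 a b (s + j + d) := by
  have key : ∀ a b : Fin 4, a ≠ b → ∀ d < 16, 2 ≤ d → ∀ s < 64,
      ∃ j < d - 1, morph2 a b (s + j) ≠ morph2 a b (s + j + d) := by
    decide +kernel
  exact key a b hab d hd16 hd s hs

def word (n : ℕ) : Fin 4 :=
  if n = 0 then 0 else morph (word (n / 8)) n

theorem word_eq (n : ℕ) : word n = morph (word (n / 8)) n := by
  rw [word]
  split_ifs with h
  · rw [h, morph_zero]
  · rfl

theorem word_eight_mul_add (q : ℕ) {j : ℕ} (hj : j < 8) : word (8 * q + j) = morph (word q) j := by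
  rw [word_eq, morph_eq_of_mod_eq _ (k := j) (by omega)]
  congr 2
  omega

theorem word_ne_succ (n : ℕ) : word n ≠ word (n + 1) := by
  obtain ⟨q, j, hj, rfl⟩ : ∃ q j, j < 8 ∧ n = 8 * q + j :=
    ⟨n / 8, n % 8, n.mod_lt (by norm_num), (Nat.div_add_mod n 8).symm⟩
  rcases Nat.lt_or_ge j 7 with hj7 | hj7
  · rw [word_eight_mul_add q hj, add_assoc, word_eight_mul_add q (by omega)]
    exact morph_ne_succ _ hj7
  · obtain rfl : j = 7 := by omega
    rw [word_eight_mul_add q hj, show 8 * q + 7 + 1 = 8 * (q + 1) + 0 by ring,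
      word_eight_mul_add _ (by norm_num), morph_zero]
    exact morph_seven_ne_zero _

theorem word_add (p : ℕ) {j : ℕ} (hj : j < 8) :
    word (p + j) = if p % 8 + j < 8 then morph (word (p / 8)) (p % 8 + j)
      else morph (word (p / 8 + 1)) (p % 8 + j) := by
  rw [word_eq, morph_eq_of_mod_eq _ (k := p % 8 + j) (by omega)]
  split_ifs with h
  · congr 2; omega
  · congr 2; omega

theorem word_eq_morph2 (i : ℕ) {j : ℕ} (hj : i % 64 + j < 128) :
    word (i + j) = morph2 (word (i / 64)) (word (i / 64 + 1)) (i % 64 + j) := by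
  rw [word_eq, word_eq ((i + j) / 8), morph2, morph_eq_of_mod_eq _ (k := i % 64 + j) (by omega),
    morph_eq_of_mod_eq _ (j := (i + j) / 8) (k := (i % 64 + j) / 8) (by omega)]
  split_ifs with h
  · congr 3; omega
  · congr 3; omega

theorem word_block_sync {p : ℕ} {a : Fin 4} (hp : ∀ j < 8, word (p + j) = morph a j) :
    p % 8 = 0 := by
  by_contra hr
  obtain ⟨j, hj, hne⟩ :=
    morph_sync (word_ne_succ (p / 8)) a (r := p % 8) (by omega) (p.mod_lt (by norm_num))
  exact hne (by rw [← word_add p hj]; exact hp j hj)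

theorem word_exists_ne_of_lt_sixteen {d : ℕ} (hd : 2 ≤ d) (hd16 : d < 16) (i : ℕ) :
    ∃ j < d - 1, word (i + j) ≠ word (i + j + d) := by
  obtain ⟨j, hj, hne⟩ := morph2_exists_ne (word_ne_succ (i / 64)) hd hd16 (i.mod_lt (by norm_num))
  refine ⟨j, hj, ?_⟩
  rwa [word_eq_morph2 i (by omega), add_assoc, word_eq_morph2 i (by omega), ← add_assoc]

/-- The window has length `2 * d - 1` rather than `2 * d`: aligning it to blocks of 8 costs up
to 7 positions, and this is the length that survives the descent from period `d` to `d / 8`. -/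
theorem word_exists_ne {d : ℕ} (hd : 2 ≤ d) (i : ℕ) :
    ∃ j < d - 1, word (i + j) ≠ word (i + j + d) := by
  induction d using Nat.strong_induction_on generalizing i with
  | _ d ih =>
  rcases Nat.lt_or_ge d 16 with hd16 | hd16
  · exact word_exists_ne_of_lt_sixteen hd hd16 i
  by_contra! hper
  have hcopy : ∀ p, i ≤ p → p + 1 < i + d → word (p + d) = word p := fun p hip hpd => by
    simpa [Nat.add_sub_cancel' hip] using (hper (p - i) (by omega)).symm
  have hblock : ∀ k, i ≤ 8 * k → 8 * k + 8 < i + d →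
      ∀ j < 8, word (8 * k + j + d) = morph (word k) j :=
    fun k hk hkd j hj => by rw [hcopy _ (by omega) (by omega), word_eight_mul_add k hj]
  set q := (i + 7) / 8
  have h8 : (8 * q + d) % 8 = 0 := word_block_sync (a := word q) fun j hj => by
    rw [add_right_comm]; exact hblock q (by omega) (by omega) j hj
  obtain ⟨j, hj, hne⟩ := ih (d / 8) (by omega) (by omega) q
  refine hne (morph_injective fun l hl => ?_)
  rw [← hblock (q + j) (by omega) (by omega) l hl, ← word_eight_mul_add _ hl]
  congr 1
  omega

theorem word_squareFree : SquareFreeSeq word := by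
  intro i d hd
  rcases Nat.lt_or_ge d 2 with hd1 | hd2
  · obtain rfl : d = 1 := by omega
    exact ⟨0, one_pos, word_ne_succ i⟩
  · obtain ⟨j, hj, hne⟩ := word_exists_ne hd2 i
    exact ⟨j, by omega, hne⟩

theorem word_ne_add_two (n : ℕ) : word n ≠ word (n + 2) := by
  obtain ⟨j, hj, hne⟩ := word_exists_ne le_rfl n
  obtain rfl : j = 0 := by omega
  exact hne

namespace SimpleGraph.IsTree

variable {V : Type*} {T : SimpleGraph V} (hT : T.IsTree) (r : V)
include hT

noncomputable def depthHom : T →g hasse ℕ where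
  toFun := T.dist r
  map_rel' h := hasse_nat_adj.2 (hT.dist_eq_dist_add_one_of_adj r h).symm

theorem eq_of_adj_of_dist_add_one {u p₁ p₂ : V} (h₁ : T.Adj u p₁) (h₂ : T.Adj u p₂)
    (hd₁ : T.dist r p₁ + 1 = T.dist r u) (hd₂ : T.dist r p₂ + 1 = T.dist r u) : p₁ = p₂ := by
  classical
  obtain ⟨q, hq, hql⟩ := hT.connected.exists_path_of_dist r u
  have hparent : ∀ p, T.Adj u p → T.dist r p + 1 = T.dist r u → p = q.penultimate := by
    intro p hp hd
    obtain ⟨q', hq', hq'l⟩ := hT.connected.exists_path_of_dist r p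
    have hu : u ∉ q'.support := fun hu => by
      have := T.dist_le (q'.takeUntil u hu)
      have := q'.length_takeUntil_le_length hu
      omega
    exact hT.isAcyclic.eq_penultimate_of_adj_end hq hp
      (hT.isAcyclic.mem_support_of_ne_mem_support_of_adj_of_isPath hq hq' hp hu)
  rw [hparent p₁ h₁ hd₁, hparent p₂ h₂ hd₂]

theorem dist_eq_add_dist_of_adj_of_dist_add_one {a u w : V}
    (hu : T.dist r u = T.dist r a + T.dist a u) (hau : a ≠ u) (hw : T.Adj u w)
    (hdw : T.dist r w + 1 = T.dist r u) : T.dist r w = T.dist r a + T.dist a w := by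
  obtain ⟨q, hql⟩ := hT.connected.exists_walk_length_eq_dist a u
  have hpos : 0 < T.dist a u := hT.connected.pos_dist_of_ne hau
  have hq : ¬q.Nil := by
    rw [← Walk.length_eq_zero_iff]
    omega
  have hpen_le : T.dist a q.penultimate + 1 ≤ T.dist a u := by
    have := T.dist_le q.dropLast
    rw [Walk.length_dropLast] at this
    omega
  have hpen : q.penultimate = w := by
    refine hT.eq_of_adj_of_dist_add_one r (q.adj_penultimate hq).symm hw ?_ hdw
    have := hT.connected.dist_triangle (u := r) (v := a) (w := q.penultimate)
    have := hT.dist_eq_dist_add_one_of_adj r (q.adj_penultimate hq)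
    omega
  have := hT.connected.dist_triangle (u := r) (v := a) (w := w)
  rw [hpen] at hpen_le
  omega

theorem dist_eq_add_dist_of_isWalkSeq {L : ℕ} {v : ℕ → V} (hv : IsWalkSeq T (L + 1) v)
    (hge : ∀ i ≤ L, T.dist r (v 0) ≤ T.dist r (v i)) :
    T.dist r (v L) = T.dist r (v 0) + T.dist (v 0) (v L) := by
  induction L with
  | zero => simp
  | succ L ih =>
    have ih := ih (hv.mono (by omega)) fun i hi => hge i (by omega)
    have hadj := hv L (by omega)
    rcases hT.dist_eq_dist_add_one_of_adj r hadj with hdown | hup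
    · have hne : v 0 ≠ v L := fun h => by
        have := hge (L + 1) le_rfl
        rw [h] at this
        omega
      exact hT.dist_eq_add_dist_of_adj_of_dist_add_one r ih hne hadj hdown.symm
    · have := hT.connected.dist_triangle (u := v 0) (v := v L) (w := v (L + 1))
      have := hT.connected.dist_triangle (u := r) (v := v 0) (w := v (L + 1))
      have := dist_eq_one_iff_adj.2 hadj
      omega

theorem strollNonrepetitive_comp_dist {C : Type*} {φ : ℕ → C}
    (hφ : WalkNonrepetitive (hasse ℕ) φ) : StrollNonrepetitive T (φ ∘ T.dist r) := by
  intro t ht v hv hstroll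
  by_contra! hrep
  have hdepth : ∀ i < t, T.dist r (v i) = T.dist r (v (t + i)) :=
    hφ t _ (hv.map (hT.depthHom r)) hrep
  obtain ⟨i₀, hi₀, hmin⟩ := (Finset.range t).exists_min_image (fun i => T.dist r (v i))
    ⟨0, by simpa⟩
  simp only [Finset.mem_range] at hi₀ hmin
  have hge : ∀ i ≤ t, T.dist r (v i₀) ≤ T.dist r (v (i₀ + i)) := fun i hi => by
    rcases Nat.lt_or_ge (i₀ + i) t with hlt | hge
    · exact hmin _ hlt
    · rw [← Nat.add_sub_cancel' hge, ← hdepth _ (by omega)]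
      exact hmin _ (by omega)
  have := hT.dist_eq_add_dist_of_isWalkSeq r (L := t) (v := fun i => v (i₀ + i))
    (hv.shift (by omega)) (by simpa using hge)
  rw [add_comm i₀, ← hdepth i₀ hi₀] at this
  exact hstroll i₀ hi₀ (hT.connected.dist_eq_zero_iff.1 (by simpa using this))

end SimpleGraph.IsTree

theorem walkNonrepetitive_word : WalkNonrepetitive (hasse ℕ) word :=
  word_squareFree.walkNonrepetitive_hasse word_ne_add_two

/-- Every tree `T` satisfies `ρ(T) ≤ 4` (hence `π(T) ≤ 4`): it has a
stroll-nonrepetitive colouring with 4 colours. -/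
theorem tree_rho_le_four {V : Type*} (T : SimpleGraph V) (h : T.IsTree) :
    ∃ φ : V → Fin 4, StrollNonrepetitive T φ := by
  obtain ⟨r⟩ := h.connected.nonempty
  exact ⟨word ∘ T.dist r, h.strollNonrepetitive_comp_dist r walkNonrepetitive_word⟩
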